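/- The pure translations in Γ_T are exactly the translations by vectors of the lattice ℤ × ℤ × 2ℤ, and likewise the pure translations in Γ_D are exactly the translations by vectors of ℤ × ℤ × 2ℤ. That is, for w ∈ ℝ³: T_w ∈ Γ_T if and only if w ∈ ℤ × ℤ × 2ℤ, and T_w ∈ Γ_D if and only if w ∈ ℤ × ℤ × 2ℤ; moreover every element of Γ_T (resp. Γ_D) whose linear part is the identity is a translation T_w with w ∈ ℤ × ℤ × 2ℤ. -/

import Mathlib

noncomputable section

/-- Points of `ℝ³`, written as `(x, y, z)`. -/
abbrev R3 : Type := ℝ × ℝ × ℝ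

/-- The translation `T_w : x ↦ x + w` of `ℝ³`, as a bijection (it is an isometry). -/
def transl (w : R3) : Equiv.Perm R3 := Equiv.addRight w

/-- The quarter-turn screw motion `τ(x,y,z) = (−y, x, z+1/2)`, as a bijection
(it is an isometry). -/
def tauE : Equiv.Perm R3 where
  toFun p := (-p.2.1, p.1, p.2.2 + 1/2)
  invFun p := (p.2.1, -p.1, p.2.2 - 1/2)
  left_inv p := by obtain ⟨x, y, z⟩ := p; simp
  right_inv p := by obtain ⟨x, y, z⟩ := p; simp

/-- The half-turn screw motion `ρ_x(x,y,z) = (x+1/2, −y, −z)`, as a bijection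
(it is an isometry). -/
def rhoxE : Equiv.Perm R3 where
  toFun p := (p.1 + 1/2, -p.2.1, -p.2.2)
  invFun p := (p.1 - 1/2, -p.2.1, -p.2.2)
  left_inv p := by obtain ⟨x, y, z⟩ := p; simp
  right_inv p := by obtain ⟨x, y, z⟩ := p; simp

/-- The half-turn screw motion `ρ_y(x,y,z) = (−x, y+1/2, 1−z)`, as a bijection
(it is an isometry). -/
def rhoyE : Equiv.Perm R3 where
  toFun p := (-p.1, p.2.1 + 1/2, 1 - p.2.2)
  invFun p := (-p.1, p.2.1 - 1/2, 1 - p.2.2)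
  left_inv p := by obtain ⟨x, y, z⟩ := p; simp
  right_inv p := by obtain ⟨x, y, z⟩ := p; simp

/-- `Γ_T`, the covering group of the tetracosm Tetra: the group generated by the
translations `T_{(1,0,0)}, T_{(0,1,0)}, T_{(0,0,2)}` and `τ`. -/
def GammaT : Subgroup (Equiv.Perm R3) :=
  Subgroup.closure {transl (1, 0, 0), transl (0, 1, 0), transl (0, 0, 2), tauE}

/-- `Γ_D`, the covering group of the didicosm Didi: the group generated by the
translations `T_{(1,0,0)}, T_{(0,1,0)}, T_{(0,0,2)}` and `ρ_x`, `ρ_y`. -/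
def GammaD : Subgroup (Equiv.Perm R3) :=
  Subgroup.closure {transl (1, 0, 0), transl (0, 1, 0), transl (0, 0, 2), rhoxE, rhoyE}

end

/-! Both groups are contained in explicit groups of affine motions, cut out by a condition that
ties the linear part of a motion to its translation part. For `Γ_T`, a motion turns the
`xy`-plane by `I ^ j` and lifts `z` by `j / 2`, so a translation has `j ∈ 4ℤ` and thus a `z`-shift
in `2ℤ`. For `Γ_D`, a motion flipping `x` shifts `y` and `z` by odd multiples of `1/2` and `1`,
and one flipping `y` shifts `x` by an odd multiple of `1/2`; a translation flips nothing, so its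
shifts lie in `ℤ × ℤ × 2ℤ`. Conversely, the lattice translations are products of the generators. -/

open Complex

def lattice : Set R3 := {w | ∃ m n k : ℤ, w = ((m : ℝ), (n : ℝ), 2 * (k : ℝ))}

theorem transl_mem_of_mem_lattice {G : Subgroup (Equiv.Perm R3)} (h₁ : transl (1, 0, 0) ∈ G)
    (h₂ : transl (0, 1, 0) ∈ G) (h₃ : transl (0, 0, 2) ∈ G) {w : R3} (hw : w ∈ lattice) :
    transl w ∈ G := by
  obtain ⟨m, n, k, rfl⟩ := hw
  have hw : ((m : ℝ), (n : ℝ), 2 * (k : ℝ)) =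
      k • ((0 : ℝ), (0 : ℝ), (2 : ℝ)) +
        (n • ((0 : ℝ), (1 : ℝ), (0 : ℝ)) + m • ((1 : ℝ), (0 : ℝ), (0 : ℝ))) := by
    simp [mul_comm]
  rw [hw, transl, Equiv.addRight_add, Equiv.addRight_add, ← Equiv.zsmul_addRight,
    ← Equiv.zsmul_addRight, ← Equiv.zsmul_addRight]
  exact mul_mem (mul_mem (zpow_mem h₁ m) (zpow_mem h₂ n)) (zpow_mem h₃ k)

def planeCoord (p : R3) : ℂ := ⟨p.1, p.2.1⟩

theorem planeCoord_add (p q : R3) : planeCoord (p + q) = planeCoord p + planeCoord q := rfl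

theorem planeCoord_zero : planeCoord 0 = 0 := rfl

theorem planeCoord_one_zero_zero : planeCoord (1, 0, 0) = 1 := rfl

theorem exists_gaussianInt_eq_I_zpow_mul (j : ℤ) (c : GaussianInt) :
    ∃ d : GaussianInt, I ^ j * c = d := by
  have hI : ((⟨0, 1⟩ : GaussianInt) : ℂ) = I := by simp [GaussianInt.toComplex_def']
  obtain ⟨n, hn⟩ := Int.eq_ofNat_of_zero_le (Int.emod_nonneg j four_ne_zero)
  refine ⟨⟨0, 1⟩ ^ n * c, ?_⟩
  rw [I_zpow_eq_zpow_mod, hn, zpow_natCast, map_mul, map_pow, hI]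

def IsTetraMotion (γ : Equiv.Perm R3) : Prop :=
  ∃ (j : ℤ) (c : GaussianInt), ∀ p : R3,
    planeCoord (γ p) = I ^ j * planeCoord p + c ∧ (γ p).2.2 = p.2.2 + j / 2

def tetraMotions : Subgroup (Equiv.Perm R3) where
  carrier := {γ | IsTetraMotion γ}
  one_mem' := ⟨0, 0, fun p => by simp⟩
  mul_mem' := by
    rintro γ δ ⟨j, c, hγ⟩ ⟨j', c', hδ⟩
    obtain ⟨d, hd⟩ := exists_gaussianInt_eq_I_zpow_mul j c'
    refine ⟨j + j', d + c, fun p => ⟨?_, ?_⟩⟩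
    · rw [Equiv.Perm.mul_apply, (hγ _).1, (hδ p).1, zpow_add₀ I_ne_zero, map_add, ← hd]
      ring
    · rw [Equiv.Perm.mul_apply, (hγ _).2, (hδ p).2]
      push_cast
      ring
  inv_mem' := by
    rintro γ ⟨j, c, hγ⟩
    obtain ⟨d, hd⟩ := exists_gaussianInt_eq_I_zpow_mul (-j) (-c)
    refine ⟨-j, d, fun q => ?_⟩
    obtain ⟨p, rfl⟩ := γ.surjective q
    simp only [Equiv.Perm.coe_inv, Equiv.symm_apply_apply, (hγ p).1, (hγ p).2, ← hd, map_neg,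
      zpow_neg]
    constructor
    · field_simp
      ring
    · push_cast
      ring

theorem GammaT_le_tetraMotions : GammaT ≤ tetraMotions := by
  refine Subgroup.closure_le _ |>.2 ?_
  rintro γ (rfl | rfl | rfl | rfl)
  · exact ⟨0, 1, fun p => ⟨by simp [planeCoord, transl, Complex.ext_iff], by simp [transl]⟩⟩
  · exact ⟨0, ⟨0, 1⟩, fun p => ⟨by simp [planeCoord, transl, Complex.ext_iff], by simp [transl]⟩⟩
  · exact ⟨4, 0, fun p => ⟨by simp [planeCoord, transl], by simp [transl]; norm_num⟩⟩
  · exact ⟨1, 0, fun p => ⟨by simp [planeCoord, tauE, Complex.ext_iff], by simp [tauE]⟩⟩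

theorem mem_lattice_of_isTetraMotion_transl {w : R3} (h : IsTetraMotion (transl w)) :
    w ∈ lattice := by
  obtain ⟨j, c, h⟩ := h
  have h₀ := h 0
  have h₁ := (h (1, 0, 0)).1
  simp only [transl, Equiv.coe_addRight, zero_add, planeCoord_add, planeCoord_zero,
    planeCoord_one_zero_zero, Prod.snd_zero, mul_zero, mul_one] at h₀ h₁
  have hc : planeCoord w = c := h₀.1
  have hrot : I ^ j = 1 := by
    rw [hc] at h₁
    exact (add_right_cancel h₁).symm
  obtain ⟨q, rfl⟩ := (isPrimitiveRoot_I.zpow_eq_one_iff_dvd j).1 hrot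
  refine ⟨c.re, c.im, q, ?_⟩
  simp only [planeCoord, GaussianInt.toComplex_def₂, Complex.mk.injEq] at hc
  ext
  · exact hc.1
  · exact hc.2
  · rw [h₀.2]
    push_cast
    ring

def IsDidiMotion (γ : Equiv.Perm R3) : Prop :=
  ∃ (s t : ℕ) (m n k : ℤ), (m : ZMod 2) = t ∧ (n : ZMod 2) = s ∧ (k : ZMod 2) = s ∧
    ∀ p : R3, γ p = ((-1) ^ s * p.1 + m / 2, (-1) ^ t * p.2.1 + n / 2, (-1) ^ (s + t) * p.2.2 + k)

theorem intCast_neg_one_pow_mul_zmod_two (s : ℕ) (m : ℤ) : (((-1) ^ s * m : ℤ) : ZMod 2) = m := by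
  simp [CharTwo.neg_eq]

def didiMotions : Subgroup (Equiv.Perm R3) where
  carrier := {γ | IsDidiMotion γ}
  one_mem' := ⟨0, 0, 0, 0, 0, by simp, by simp, by simp, fun p => by simp⟩
  mul_mem' := by
    rintro γ δ ⟨s, t, m, n, k, hm, hn, hk, hγ⟩ ⟨s', t', m', n', k', hm', hn', hk', hδ⟩
    refine ⟨s + s', t + t', (-1) ^ s * m' + m, (-1) ^ t * n' + n, (-1) ^ (s + t) * k' + k,
      ?_, ?_, ?_, fun p => ?_⟩
    · rw [Int.cast_add, intCast_neg_one_pow_mul_zmod_two, hm, hm']; push_cast; ring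
    · rw [Int.cast_add, intCast_neg_one_pow_mul_zmod_two, hn, hn']; push_cast; ring
    · rw [Int.cast_add, intCast_neg_one_pow_mul_zmod_two, hk, hk']; push_cast; ring
    · rw [Equiv.Perm.mul_apply, hδ, hγ]
      ext <;> push_cast <;> ring
  inv_mem' := by
    rintro γ ⟨s, t, m, n, k, hm, hn, hk, hγ⟩
    refine ⟨s, t, -((-1) ^ s * m), -((-1) ^ t * n), -((-1) ^ (s + t) * k), ?_, ?_, ?_,
      fun q => ?_⟩
    · rw [Int.cast_neg, intCast_neg_one_pow_mul_zmod_two, hm, CharTwo.neg_eq]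
    · rw [Int.cast_neg, intCast_neg_one_pow_mul_zmod_two, hn, CharTwo.neg_eq]
    · rw [Int.cast_neg, intCast_neg_one_pow_mul_zmod_two, hk, CharTwo.neg_eq]
    · obtain ⟨p, rfl⟩ := γ.surjective q
      simp only [Equiv.Perm.coe_inv, Equiv.symm_apply_apply]
      rw [hγ p]
      ext <;> push_cast <;> ring_nf <;> simp

theorem GammaD_le_didiMotions : GammaD ≤ didiMotions := by
  refine Subgroup.closure_le _ |>.2 ?_
  rintro γ (rfl | rfl | rfl | rfl | rfl)
  · exact ⟨0, 0, 2, 0, 0, by decide, by decide, by decide, fun p => by ext <;> simp [transl]⟩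
  · exact ⟨0, 0, 0, 2, 0, by decide, by decide, by decide, fun p => by ext <;> simp [transl]⟩
  · exact ⟨0, 0, 0, 0, 2, by decide, by decide, by decide, fun p => by ext <;> simp [transl]⟩
  · exact ⟨0, 1, 1, 0, 0, by decide, by decide, by decide, fun p => by ext <;> simp [rhoxE]⟩
  · exact ⟨1, 0, 0, 1, 1, by decide, by decide, by decide, fun p => by ext <;> simp [rhoyE]; ring⟩

theorem mem_lattice_of_isDidiMotion_transl {w : R3} (h : IsDidiMotion (transl w)) :
    w ∈ lattice := by
  obtain ⟨s, t, m, n, k, hm, hn, hk, h⟩ := h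
  have h₀ := h 0
  have h₁ := h (1, 0, 0)
  have h₂ := h (0, 1, 0)
  simp only [transl, Equiv.coe_addRight, zero_add, Prod.ext_iff, Prod.fst_zero, Prod.snd_zero,
    Prod.fst_add, Prod.snd_add, mul_zero, mul_one] at h₀ h₁ h₂
  have hs : Even s := (neg_one_pow_eq_one_iff_even (by norm_num : (-1 : ℝ) ≠ 1)).1 (by linarith)
  have ht : Even t := (neg_one_pow_eq_one_iff_even (by norm_num : (-1 : ℝ) ≠ 1)).1 (by linarith)
  rw [ZMod.natCast_eq_zero_iff_even.2 hs] at hn hk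
  rw [ZMod.natCast_eq_zero_iff_even.2 ht] at hm
  obtain ⟨m', rfl⟩ := ZMod.intCast_eq_zero_iff_even.1 hm
  obtain ⟨n', rfl⟩ := ZMod.intCast_eq_zero_iff_even.1 hn
  obtain ⟨k', rfl⟩ := ZMod.intCast_eq_zero_iff_even.1 hk
  refine ⟨m', n', k', ?_⟩
  ext
  · rw [h₀.1]; push_cast; ring
  · rw [h₀.2.1]; push_cast; ring
  · rw [h₀.2.2]; push_cast; ring

/-- the pure translations in `Γ_T` and in `Γ_D` are exactly the
translations by vectors of the lattice `ℤ × ℤ × 2ℤ`; moreover every element of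
`Γ_T` (resp. `Γ_D`) whose linear part is the identity (i.e. of the form
`x ↦ x + b`) is such a lattice translation. -/
theorem pure_translations :
    (∀ w : R3, transl w ∈ GammaT ↔
      ∃ m n k : ℤ, w = ((m : ℝ), (n : ℝ), 2 * (k : ℝ))) ∧
    (∀ w : R3, transl w ∈ GammaD ↔
      ∃ m n k : ℤ, w = ((m : ℝ), (n : ℝ), 2 * (k : ℝ))) ∧
    (∀ γ ∈ GammaT, ∀ b : R3, (∀ x : R3, γ x = x + b) →
      γ = transl b ∧ ∃ m n k : ℤ, b = ((m : ℝ), (n : ℝ), 2 * (k : ℝ))) ∧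
    (∀ γ ∈ GammaD, ∀ b : R3, (∀ x : R3, γ x = x + b) →
      γ = transl b ∧ ∃ m n k : ℤ, b = ((m : ℝ), (n : ℝ), 2 * (k : ℝ))) := by
  have hT (w : R3) : transl w ∈ GammaT ↔ w ∈ lattice :=
    ⟨fun hw => mem_lattice_of_isTetraMotion_transl (GammaT_le_tetraMotions hw),
      transl_mem_of_mem_lattice (Subgroup.subset_closure (by simp))
        (Subgroup.subset_closure (by simp)) (Subgroup.subset_closure (by simp))⟩
  have hD (w : R3) : transl w ∈ GammaD ↔ w ∈ lattice :=
    ⟨fun hw => mem_lattice_of_isDidiMotion_transl (GammaD_le_didiMotions hw),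
      transl_mem_of_mem_lattice (Subgroup.subset_closure (by simp))
        (Subgroup.subset_closure (by simp)) (Subgroup.subset_closure (by simp))⟩
  refine ⟨hT, hD, fun γ hγ b hb => ?_, fun γ hγ b hb => ?_⟩
  · obtain rfl : γ = transl b := Equiv.ext hb
    exact ⟨rfl, (hT b).1 hγ⟩
  · obtain rfl : γ = transl b := Equiv.ext hb
    exact ⟨rfl, (hD b).1 hγ⟩
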